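/- Let (g, q_g, α, β) be a 2m-dimensional quadratic n-BiHom-Lie algebra over a field K of characteristic ≠ 2, with α surjective, and let I be an isotropic m-dimensional subspace of g. If I is a BiHom-ideal of (g, [·,...,·], α, β), then [β(I), β(g),...,β(g), α(I)] = 0, i.e. [β(i), β(y₁),...,β(y_{n−2}), α(j)] = 0 for all i, j ∈ I and y₁,...,y_{n−2} ∈ g. -/

import Mathlib

open Function Finset Module

universe u v w

/-- Twist a tuple: apply `a` to the last coordinate and `b` to all the other coordinates,
so that `twMap a b x = (b x₁, …, b xₙ₋₁, a xₙ)`. -/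
def twMap {g : Type v} (a b : g → g) {m : ℕ} (x : Fin (m + 1) → g) : Fin (m + 1) → g :=
  fun i => if i = Fin.last m then a (x i) else b (x i)

/-- An `n`-BiHom-Lie algebra over `K`, where the arity of the bracket is `n = m + 1`. -/
structure NBiHomLie (K : Type u) [Field K] (m : ℕ) (g : Type v)
    [AddCommGroup g] [Module K g] where
  br : MultilinearMap K (fun _ : Fin (m + 1) => g) g
  α : g →ₗ[K] g
  β : g →ₗ[K] g
  comm : ∀ z, α (β z) = β (α z)
  alpha_br : ∀ x : Fin (m + 1) → g, α (br x) = br fun i => α (x i)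
  beta_br : ∀ x : Fin (m + 1) → g, β (br x) = br fun i => β (x i)
  skew : ∀ (x : Fin (m + 1) → g) (i j : Fin (m + 1)), (i : ℕ) + 1 = (j : ℕ) →
    br (twMap ⇑α ⇑β x) = - br (twMap ⇑α ⇑β (x ∘ Equiv.swap i j))
  jacobi : ∀ (x : Fin m → g) (y : Fin (m + 1) → g),
    br (Fin.snoc (fun i => β (β (x i))) (br (twMap ⇑α ⇑β y))) =
      ∑ k : Fin (m + 1), ((-1 : K) ^ (m - (k : ℕ))) •
        br (Fin.snoc (fun i => β (β (y (k.succAbove i))))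
          (br (twMap ⇑α ⇑β (Fin.snoc x (y k)))))

/-- A representation of an `n`-BiHom-Lie algebra (`n = m + 2`) on a vector space `V`. -/
structure NRep {K : Type u} [Field K] {m : ℕ} {g : Type v} [AddCommGroup g] [Module K g]
    (L : NBiHomLie K (m + 1) g) (V : Type w) [AddCommGroup V] [Module K V] where
  ρ : MultilinearMap K (fun _ : Fin (m + 1) => g) (Module.End K V)
  αV : V →ₗ[K] V
  βV : V →ₗ[K] V
  rep1 : ∀ x : Fin (m + 1) → g, ρ (fun i => L.α (x i)) ∘ₗ αV = αV ∘ₗ ρ x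
  rep2 : ∀ x : Fin (m + 1) → g, ρ (fun i => L.β (x i)) ∘ₗ βV = βV ∘ₗ ρ x
  rep3 : ∀ x y : Fin (m + 1) → g,
    ρ (fun i => L.α (L.β (x i))) ∘ₗ ρ y - ρ (fun i => L.β (y i)) ∘ₗ ρ (fun i => L.α (x i)) =
      ∑ i : Fin (m + 1),
        ρ (Function.update (fun j => L.β (y j)) i
            (L.br (Fin.snoc (fun j => L.β (x j)) (y i)))) ∘ₗ βV
  rep4 : ∀ x y : Fin (m + 1) → g,
    ρ (Fin.snoc (fun j : Fin m => L.β (y j.succ))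
        (L.br (Fin.snoc (fun j => L.β (x j)) (y 0)))) ∘ₗ βV =
      (∑ i : Fin (m + 1), ((-1 : K) ^ (m + 1 - (i : ℕ))) •
        (ρ (Fin.snoc (fun j : Fin m => L.α (L.β (x (i.succAbove j)))) (L.β (y 0))) ∘ₗ
          ρ (Fin.snoc (fun j : Fin m => y j.succ) (L.α (x i))))) +
        ρ (fun i => L.α (L.β (x i))) ∘ₗ ρ y
/-- An `n`-Lie algebra (Filippov algebra) over `K`, where the arity is `n = m + 1`. -/
structure NLie (K : Type u) [Field K] (m : ℕ) (g : Type v)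
    [AddCommGroup g] [Module K g] where
  br : MultilinearMap K (fun _ : Fin (m + 1) => g) g
  skew : ∀ (x : Fin (m + 1) → g) (i j : Fin (m + 1)), i ≠ j →
    br (x ∘ Equiv.swap i j) = - br x
  filippov : ∀ (x : Fin m → g) (y : Fin (m + 1) → g),
    br (Fin.snoc x (br y)) =
      ∑ i : Fin (m + 1), br (Function.update y i (br (Fin.snoc x (y i))))

/-- A representation of an `n`-Lie algebra (`n = m + 2`) on a vector space `V`. -/
structure NLieRep {K : Type u} [Field K] {m : ℕ} {g : Type v} [AddCommGroup g] [Module K g]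
    (L : NLie K (m + 1) g) (V : Type w) [AddCommGroup V] [Module K V] where
  ρ : MultilinearMap K (fun _ : Fin (m + 1) => g) (Module.End K V)
  repa : ∀ x y : Fin (m + 1) → g,
    ρ x ∘ₗ ρ y - ρ y ∘ₗ ρ x =
      ∑ i : Fin (m + 1), ρ (Function.update y i (L.br (Fin.snoc x (y i))))
  repb : ∀ x y : Fin (m + 1) → g,
    ρ (Fin.snoc (fun j : Fin m => y j.succ) (L.br (Fin.snoc x (y 0)))) =
      (∑ i : Fin (m + 1), ((-1 : K) ^ (m + 1 - (i : ℕ))) •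
        (ρ (Fin.snoc (fun j : Fin m => x (i.succAbove j)) (y 0)) ∘ₗ
          ρ (Fin.snoc (fun j : Fin m => y j.succ) (x i)))) + ρ x ∘ₗ ρ y

/-- An `n`-cocycle (`n = m + 2`) on an `n`-BiHom-Lie algebra `L` with values in a
representation `R`. -/
def IsNCocycle {K : Type u} [Field K] {m : ℕ} {g : Type v} {V : Type w}
    [AddCommGroup g] [Module K g] [AddCommGroup V] [Module K V]
    (L : NBiHomLie K (m + 1) g) (R : NRep L V)
    (θ : (Fin (m + 2) → g) → V) : Prop :=
  (∀ x, R.αV (θ x) = θ fun i => L.α (x i)) ∧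
  (∀ x, R.βV (θ x) = θ fun i => L.β (x i)) ∧
  (∀ (x : Fin (m + 2) → g) (i j : Fin (m + 2)), (i : ℕ) + 1 = (j : ℕ) →
    θ (fun k => L.β (x k)) = - θ (fun k => L.β (x (Equiv.swap i j k)))) ∧
  (∀ (x : Fin (m + 1) → g) (y : Fin (m + 2) → g),
    θ (Fin.snoc (fun i => L.β (L.β (x i))) (L.br (twMap ⇑L.α ⇑L.β y))) +
        R.ρ (fun i => L.β (L.β (x i))) (θ (twMap ⇑L.α ⇑L.β y)) =
      ∑ k : Fin (m + 2), ((-1 : K) ^ (m + 1 - (k : ℕ))) •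
        (θ (Fin.snoc (fun i : Fin (m + 1) => L.β (L.β (y (k.succAbove i))))
              (L.br (twMap ⇑L.α ⇑L.β (Fin.snoc x (y k))))) +
          R.ρ (fun i => L.β (L.β (y (k.succAbove i))))
            (θ (twMap ⇑L.α ⇑L.β (Fin.snoc x (y k))))))

/-- An `n`-cocycle (`n = m + 2`) with values in the coadjoint representation
`ad*(x₁,…,xₙ₋₁)(f) = - f ∘ ad(x₁,…,xₙ₋₁)` on the dual space `g*`. -/
def IsCoadCocycle {K : Type u} [Field K] {m : ℕ} {g : Type v}
    [AddCommGroup g] [Module K g] (L : NBiHomLie K (m + 1) g)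
    (θ : (Fin (m + 2) → g) → Module.Dual K g) : Prop :=
  (∀ (x : Fin (m + 2) → g) (z : g), θ x (L.α z) = θ (fun i => L.α (x i)) z) ∧
  (∀ (x : Fin (m + 2) → g) (z : g), θ x (L.β z) = θ (fun i => L.β (x i)) z) ∧
  (∀ (x : Fin (m + 2) → g) (i j : Fin (m + 2)), (i : ℕ) + 1 = (j : ℕ) →
    θ (fun k => L.β (x k)) = - θ (fun k => L.β (x (Equiv.swap i j k)))) ∧
  (∀ (x : Fin (m + 1) → g) (y : Fin (m + 2) → g) (z : g),
    θ (Fin.snoc (fun i => L.β (L.β (x i))) (L.br (twMap ⇑L.α ⇑L.β y))) z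
        - θ (twMap ⇑L.α ⇑L.β y) (L.br (Fin.snoc (fun i => L.β (L.β (x i))) z)) =
      ∑ k : Fin (m + 2), ((-1 : K) ^ (m + 1 - (k : ℕ))) •
        (θ (Fin.snoc (fun i : Fin (m + 1) => L.β (L.β (y (k.succAbove i))))
              (L.br (twMap ⇑L.α ⇑L.β (Fin.snoc x (y k))))) z
          - θ (twMap ⇑L.α ⇑L.β (Fin.snoc x (y k)))
              (L.br (Fin.snoc (fun i => L.β (L.β (y (k.succAbove i)))) z))))

/-- `S` is the `T*_θ`-extension of the `n`-BiHom-Lie algebra `L` (`n = m + 2`) by the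
cocycle `θ`, built from the coadjoint representation. -/
def IsTStarExt {K : Type u} [Field K] {m : ℕ} {g : Type v}
    [AddCommGroup g] [Module K g] (L : NBiHomLie K (m + 1) g)
    (θ : (Fin (m + 2) → g) → Module.Dual K g)
    (S : NBiHomLie K (m + 1) (g × Module.Dual K g)) : Prop :=
  (∀ p : g × Module.Dual K g, S.α p = (L.α p.1, p.2 ∘ₗ L.α)) ∧
  (∀ p : g × Module.Dual K g, S.β p = (L.β p.1, p.2 ∘ₗ L.β)) ∧
  (∀ z : Fin (m + 2) → g × Module.Dual K g, (S.br z).1 = L.br fun i => (z i).1) ∧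
  (∀ (z : Fin (m + 2) → g × Module.Dual K g) (w : g),
    (S.br z).2 w = θ (fun i => (z i).1) w
      + (∑ i : Fin (m + 1), ((-1 : K) ^ (m + 1 - (i : ℕ))) •
          (- (z i.castSucc).2 (Function.invFun ⇑L.β (L.α (L.br
              (Fin.snoc (Fin.snoc (fun j : Fin m => (z ((i.succAbove j).castSucc)).1)
                (Function.invFun ⇑L.α (L.β ((z (Fin.last (m + 1))).1)))) w))))))
      + (- (z (Fin.last (m + 1))).2
            (L.br (Fin.snoc (fun j : Fin (m + 1) => (z j.castSucc).1) w))))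
/-- The derived series of an `n`-BiHom-Lie algebra (`n = m + 1`):
`g⁽⁰⁾ = g`, `g⁽ᵖ⁺¹⁾ = [g⁽ᵖ⁾, …, g⁽ᵖ⁾, g]`. -/
def nbhlDerivedSeries {K : Type u} [Field K] {m : ℕ} {g : Type v} [AddCommGroup g] [Module K g]
    (L : NBiHomLie K m g) : ℕ → Submodule K g
  | 0 => ⊤
  | p + 1 => Submodule.span K
      {z | ∃ (a : Fin m → g) (b : g), (∀ i, a i ∈ nbhlDerivedSeries L p) ∧ z = L.br (Fin.snoc a b)}

/-- The central descending series of an `n`-BiHom-Lie algebra (`n = m + 1`):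
`g⁰ = g`, `gᵖ⁺¹ = [gᵖ, g, …, g]`. -/
def nbhlCentralSeries {K : Type u} [Field K] {m : ℕ} {g : Type v} [AddCommGroup g] [Module K g]
    (L : NBiHomLie K m g) : ℕ → Submodule K g
  | 0 => ⊤
  | p + 1 => Submodule.span K
      {z | ∃ (a : g) (b : Fin m → g), a ∈ nbhlCentralSeries L p ∧ z = L.br (Fin.cons a b)}

/-- `(L, B)` is a quadratic `n`-BiHom-Lie algebra (`n = m + 1`): the bilinear form `B` is
nondegenerate, symmetric, `αβ`-invariant and `α`, `β` are `B`-symmetric. -/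
def IsQuadratic {K : Type u} [Field K] {m : ℕ} {E : Type v} [AddCommGroup E] [Module K E]
    (L : NBiHomLie K m E) (B : E → E → K) : Prop :=
  (∀ x, (∀ y, B x y = 0) → x = 0) ∧
  (∀ x y, B x y = B y x) ∧
  (∀ (x : Fin m → E) (u v : E),
    B (L.br (twMap ⇑L.α ⇑L.β (Fin.snoc x u))) (L.α v) =
      - B (L.α u) (L.br (twMap ⇑L.α ⇑L.β (Fin.snoc x v)))) ∧
  (∀ x y, B (L.α x) y = B x (L.α y)) ∧
  (∀ x y, B (L.β x) y = B x (L.β y))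

/-- `f` is a `1`-cochain of the `n`-BiHom-Lie algebra `L`. -/
def IsCochain1 {K : Type u} [Field K] {m : ℕ} {g : Type v} [AddCommGroup g] [Module K g]
    (L : NBiHomLie K m g) (f : g → g) : Prop :=
  (∀ z, f (L.α z) = L.α (f z)) ∧ (∀ z, f (L.β z) = L.β (f z))

/-- `c` is a `2`-cochain of the `n`-BiHom-Lie algebra `L` (`n = m + 1`). -/
def IsCochain2 {K : Type u} [Field K] {m : ℕ} {g : Type v} [AddCommGroup g] [Module K g]
    (L : NBiHomLie K m g) (c : (Fin (m + 1) → g) → g) : Prop :=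
  (∀ x, L.α (c x) = c fun i => L.α (x i)) ∧ (∀ x, L.β (c x) = c fun i => L.β (x i))

/-- `d` is a `3`-cochain of the `n`-BiHom-Lie algebra `L` (`n = m + 1`). -/
def IsCochain3 {K : Type u} [Field K] {m : ℕ} {g : Type v} [AddCommGroup g] [Module K g]
    (L : NBiHomLie K m g) (d : (Fin m → g) → (Fin (m + 1) → g) → g) : Prop :=
  (∀ x y, L.α (d x y) = d (fun i => L.α (x i)) fun i => L.α (y i)) ∧
  (∀ x y, L.β (d x y) = d (fun i => L.β (x i)) fun i => L.β (y i))

/-- The first coboundary operator `δ¹` of an `n`-BiHom-Lie algebra (`n = m + 1`). -/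
def delta1 {K : Type u} [Field K] {m : ℕ} {g : Type v} [AddCommGroup g] [Module K g]
    (L : NBiHomLie K m g) (f : g → g) : (Fin (m + 1) → g) → g :=
  fun x => - f (L.br x) + ∑ i : Fin (m + 1), L.br (Function.update x i (f (x i)))

/-- The second coboundary operator `δ²` of an `n`-BiHom-Lie algebra (`n = m + 1`). -/
def delta2 {K : Type u} [Field K] {m : ℕ} {g : Type v} [AddCommGroup g] [Module K g]
    (L : NBiHomLie K m g) (c : (Fin (m + 1) → g) → g) :
    (Fin m → g) → (Fin (m + 1) → g) → g :=
  fun x y =>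
    L.br (Fin.snoc (fun i => L.β (L.β (x i))) (c (twMap ⇑L.α ⇑L.β y))) +
      c (Fin.snoc (fun i => L.β (L.β (x i))) (L.br (twMap ⇑L.α ⇑L.β y))) -
      ∑ i : Fin (m + 1), ((-1 : K) ^ (m - (i : ℕ))) •
        (L.br (Fin.snoc (fun j : Fin m => L.β (L.β (y (i.succAbove j))))
            (c (twMap ⇑L.α ⇑L.β (Fin.snoc x (y i))))) +
          c (Fin.snoc (fun j : Fin m => L.β (L.β (y (i.succAbove j))))
            (L.br (twMap ⇑L.α ⇑L.β (Fin.snoc x (y i))))))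

/-- `F` is a one-parameter formal deformation `f_t = Σ_p F p · tᵖ` of the
`n`-BiHom-Lie algebra `L` (`n = m + 1`). -/
def IsDeformation {K : Type u} [Field K] {m : ℕ} {g : Type v} [AddCommGroup g] [Module K g]
    (L : NBiHomLie K m g) (F : ℕ → MultilinearMap K (fun _ : Fin (m + 1) => g) g) : Prop :=
  (∀ x, F 0 x = L.br x) ∧
  (∀ (p : ℕ) (x : Fin (m + 1) → g), L.α (F p x) = F p fun i => L.α (x i)) ∧
  (∀ (p : ℕ) (x : Fin (m + 1) → g), L.β (F p x) = F p fun i => L.β (x i)) ∧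
  (∀ (l : ℕ) (x : Fin m → g) (y : Fin (m + 1) → g),
    ∑ p ∈ Finset.range (l + 1),
        F p (Fin.snoc (fun i => L.β (L.β (x i))) (F (l - p) (twMap ⇑L.α ⇑L.β y))) =
      ∑ k : Fin (m + 1), ((-1 : K) ^ (m - (k : ℕ))) •
        ∑ p ∈ Finset.range (l + 1),
          F p (Fin.snoc (fun j => L.β (L.β (y (k.succAbove j))))
            (F (l - p) (twMap ⇑L.α ⇑L.β (Fin.snoc x (y k))))))

/-- `Ψ` is a formal automorphism exhibiting the equivalence of the deformations
`F` and `F'` of the `n`-BiHom-Lie algebra `L` (`n = m + 1`). -/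
def IsEquivDeform {K : Type u} [Field K] {m : ℕ} {g : Type v} [AddCommGroup g] [Module K g]
    (L : NBiHomLie K m g) (F F' : ℕ → MultilinearMap K (fun _ : Fin (m + 1) => g) g)
    (Ψ : ℕ → (g →ₗ[K] g)) : Prop :=
  (∀ z, Ψ 0 z = z) ∧
  (∀ (i : ℕ) (z : g), Ψ i (L.α z) = L.α (Ψ i z)) ∧
  (∀ (i : ℕ) (z : g), Ψ i (L.β z) = L.β (Ψ i z)) ∧
  (∀ (l : ℕ) (x : Fin (m + 1) → g),
    ∑ p ∈ Finset.range (l + 1), Ψ p (F (l - p) x) =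
      ∑ p ∈ Finset.range (l + 1),
        ∑ c ∈ Fintype.piFinset (fun _ : Fin (m + 1) => Finset.range (l + 1)),
          if p + ∑ i, c i = l then F' p (fun i => Ψ (c i) (x i)) else 0)
/-- The data of a `T*_θ`-extension: an `n`-BiHom-Lie algebra `B` (`n = m + 2`), an
`n`-cocycle `θ : Bⁿ → B*` for the coadjoint representation satisfying the symmetry
condition, and the resulting quadratic `n`-BiHom-Lie algebra structure on `B ⊕ B*`. -/
structure TStarExtData (K : Type u) [Field K] (m : ℕ) where
  B : Type v
  [addB : AddCommGroup B]
  [modB : Module K B]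
  LB : NBiHomLie K (m + 1) B
  θ : MultilinearMap K (fun _ : Fin (m + 2) => B) (Module.Dual K B)
  hθ : IsCoadCocycle LB ⇑θ
  hθsym : ∀ (x : Fin (m + 1) → B) (u v : B),
    θ (twMap ⇑LB.α ⇑LB.β (Fin.snoc x u)) (LB.α v) +
      θ (twMap ⇑LB.α ⇑LB.β (Fin.snoc x v)) (LB.α u) = 0
  S : NBiHomLie K (m + 1) (B × Module.Dual K B)
  hS : IsTStarExt LB ⇑θ S

attribute [instance] TStarExtData.addB TStarExtData.modB

/-! Invariance of `q` moves the bracket across the form: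
`q([β i, β y, α j], α v) = -q(α j, [β i, β y, α v])`, and the right-hand side vanishes because
the ideal `I` contains both arguments and is isotropic. As `α` is onto, the bracket is then
`q`-orthogonal to all of `g`, hence zero by nondegeneracy. -/

theorem twMap_snoc {g : Type v} (a b : g → g) {m : ℕ} (x : Fin m → g) (u : g) :
    twMap a b (Fin.snoc x u) = Fin.snoc (fun k => b (x k)) (a u) := by
  funext k
  induction k using Fin.lastCases <;> simp [twMap]

theorem cons_snoc_eq_twMap {g : Type v} (a b : g → g) {m : ℕ} (i u : g) (y : Fin m → g) :
    (Fin.cons (b i) (Fin.snoc (fun k => b (y k)) (a u)) : Fin (m + 2) → g) =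
      twMap a b (Fin.snoc (Fin.cons i y) u) := by
  rw [twMap_snoc, Fin.cons_snoc_eq_snoc_cons]
  congr
  exact (Fin.comp_cons b i y).symm

namespace IsQuadratic

variable {K : Type u} [Field K] {m : ℕ} {E : Type v} [AddCommGroup E] [Module K E]
  {L : NBiHomLie K m E} {B : E → E → K}

theorem br_twMap_snoc_eq_zero_of_isotropic (hB : IsQuadratic L B)
    (hα : Function.Surjective ⇑L.α) {S : Set E} (hS : ∀ a ∈ S, ∀ b ∈ S, B a b = 0)
    {x : Fin m → E} {u : E} (hu : L.α u ∈ S)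
    (hx : ∀ v, L.br (twMap ⇑L.α ⇑L.β (Fin.snoc x v)) ∈ S) :
    L.br (twMap ⇑L.α ⇑L.β (Fin.snoc x u)) = 0 := by
  refine hB.1 _ fun w => ?_
  obtain ⟨v, rfl⟩ := hα w
  rw [hB.2.2.1, hS _ hu _ (hx v), neg_zero]

end IsQuadratic

theorem isotropic_ideal_bracket_zero_general {K : Type u} [Field K] {m : ℕ} {g : Type v}
    [AddCommGroup g] [Module K g]
    (L : NBiHomLie K (m + 1) g) (q : g →ₗ[K] g →ₗ[K] K)
    (hquad : IsQuadratic L fun x y => q x y)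
    (hαsurj : Function.Surjective ⇑L.α)
    (I : Submodule K g)
    (hIiso : ∀ a ∈ I, ∀ b ∈ I, q a b = 0)
    (hIα : ∀ a ∈ I, L.α a ∈ I) (hIβ : ∀ a ∈ I, L.β a ∈ I)
    (hIbr : ∀ a ∈ I, ∀ y : Fin (m + 1) → g, L.br (Fin.cons a y) ∈ I) :
    ∀ i ∈ I, ∀ j ∈ I, ∀ y : Fin m → g,
      L.br (Fin.cons (L.β i) (Fin.snoc (fun k => L.β (y k)) (L.α j))) = 0 := by
  intro i hi j hj y
  rw [cons_snoc_eq_twMap]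
  refine hquad.br_twMap_snoc_eq_zero_of_isotropic hαsurj (S := I) hIiso (hIα j hj) fun v => ?_
  rw [← cons_snoc_eq_twMap]
  exact hIbr _ (hIβ i hi) _

/-- **Isotropic BiHom-ideals.** Let `(g, q, α, β)` be a `2d`-dimensional quadratic
`n`-BiHom-Lie algebra (`n = m + 2`) over a field of characteristic `≠ 2` with `α`
surjective, and let `I` be an isotropic `d`-dimensional subspace of `g`. If `I` is a
BiHom-ideal of `g`, then `[β(I), β(g), …, β(g), α(I)] = 0`. -/
theorem isotropic_ideal_bracket_zero {K : Type u} [Field K] {m d : ℕ} {g : Type v}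
    [AddCommGroup g] [Module K g] [FiniteDimensional K g]
    (L : NBiHomLie K (m + 1) g) (q : g →ₗ[K] g →ₗ[K] K)
    (hquad : IsQuadratic L fun x y => q x y)
    (hdim : Module.finrank K g = 2 * d) (hchar : (2 : K) ≠ 0)
    (hαsurj : Function.Surjective ⇑L.α)
    (I : Submodule K g) (hIdim : Module.finrank K I = d)
    (hIiso : ∀ a ∈ I, ∀ b ∈ I, q a b = 0)
    (hIα : ∀ a ∈ I, L.α a ∈ I) (hIβ : ∀ a ∈ I, L.β a ∈ I)
    (hIbr : ∀ a ∈ I, ∀ y : Fin (m + 1) → g, L.br (Fin.cons a y) ∈ I) :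
    ∀ i ∈ I, ∀ j ∈ I, ∀ y : Fin m → g,
      L.br (Fin.cons (L.β i) (Fin.snoc (fun k => L.β (y k)) (L.α j))) = 0 :=
  isotropic_ideal_bracket_zero_general L q hquad hαsurj I hIiso hIα hIβ hIbr
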